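/- arXiv:0806.0906 — 2 statements merged into one kernel-verified Lean document; each statement's English description precedes it below -/
import Mathlib

section
/- If a finite simple graph G is the disjoint union of two graphs H_1 and H_2, then β(G) = β(H_1) · β(H_2). -/
/-- One commutation move: swap two consecutive letters that are non-adjacent in `G`. -/
def CommStep {V : Type*} (G : SimpleGraph V) (w w' : List V) : Prop :=
  ∃ (a b : V) (u v : List V),
    ¬ G.Adj a b ∧ w = u ++ a :: b :: v ∧ w' = u ++ b :: a :: v

/-- Commutation equivalence of words: the equivalence relation generated by commutation moves. -/
def commSetoid {V : Type*} (G : SimpleGraph V) : Setoid (List V) :=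
  ⟨Relation.EqvGen (CommStep G), Relation.EqvGen.is_equivalence _⟩

/-- `bWords G k` = number of commutation classes of injective words of length `k` on `G`. -/
noncomputable def bWords {V : Type*} (G : SimpleGraph V) (k : ℕ) : ℕ :=
  Nat.card (Quotient (Setoid.comap
    (fun w : {w : List V // w.Nodup ∧ w.length = k} => w.1) (commSetoid G)))

/-- The boolean number `β(G) = (-1)^{|V|} ∑_{k=0}^{|V|} (-1)^k b_k(G)`. -/
noncomputable def booleanNumber {V : Type*} (G : SimpleGraph V) [Fintype V] : ℤ :=
  (-1) ^ (Fintype.card V) *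
    ∑ k ∈ Finset.range (Fintype.card V + 1), (-1) ^ k * (bWords G k : ℤ)

/-- The disjoint union of two simple graphs. -/
def disjUnionGraph {V₁ V₂ : Type*} (H₁ : SimpleGraph V₁) (H₂ : SimpleGraph V₂) :
    SimpleGraph (V₁ ⊕ V₂) where
  Adj a b :=
    match a, b with
    | Sum.inl x, Sum.inl y => H₁.Adj x y
    | Sum.inr x, Sum.inr y => H₂.Adj x y
    | _, _ => False
  symm := by
    constructor
    rintro (x | x) (y | y) h
    · exact H₁.adj_symm h
    · exact h
    · exact h
    · exact H₂.adj_symm h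
  loopless := by
    constructor
    rintro (x | x) h
    · exact H₁.irrefl h
    · exact H₂.irrefl h

/-!
Letters from different components commute, so every word on `H₁ ⊔ H₂` is equivalent to its
`H₁`-letters followed by its `H₂`-letters, and two words are equivalent exactly when their
`H₁`-parts and their `H₂`-parts are. Hence `b_k(H₁ ⊔ H₂) = ∑_{i+j=k} b_i(H₁) b_j(H₂)`: the
polynomial `∑ b_k(G) X^k` is multiplicative, and `β(G)` is `(-1)^{|V(G)|}` times its value at `-1`.
-/

open Finset Polynomial

section CommutationEquivalence

variable {V W : Type*} {G : SimpleGraph V} {G' : SimpleGraph W}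

theorem Relation.EqvGen.map {α β : Type*} {r : α → α → Prop} {s : β → β → Prop} (f : α → β)
    (hf : ∀ a b, r a b → Relation.EqvGen s (f a) (f b)) {a b : α} (h : Relation.EqvGen r a b) :
    Relation.EqvGen s (f a) (f b) := by
  induction h with
  | rel x y hxy => exact hf x y hxy
  | refl x => exact .refl _
  | symm x y _ ih => exact .symm _ _ ih
  | trans x y z _ _ ih₁ ih₂ => exact .trans _ _ _ ih₁ ih₂

theorem commSetoid_length {w w' : List V} (h : commSetoid G w w') : w.length = w'.length := by
  induction h with
  | rel x y hxy =>
    obtain ⟨a, b, u, v, -, rfl, rfl⟩ := hxy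
    simp
  | refl x => rfl
  | symm x y _ ih => exact ih.symm
  | trans x y z _ _ ih₁ ih₂ => exact ih₁.trans ih₂

theorem commSetoid_append_left (u : List V) {w w' : List V} (h : commSetoid G w w') :
    commSetoid G (u ++ w) (u ++ w') := by
  refine Relation.EqvGen.map (u ++ ·) (fun _ _ hstep => .rel _ _ ?_) h
  obtain ⟨a, b, u', v, hab, rfl, rfl⟩ := hstep
  exact ⟨a, b, u ++ u', v, hab, by simp, by simp⟩

theorem commSetoid_append_right (v : List V) {w w' : List V} (h : commSetoid G w w') :
    commSetoid G (w ++ v) (w' ++ v) := by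
  refine Relation.EqvGen.map (· ++ v) (fun _ _ hstep => .rel _ _ ?_) h
  obtain ⟨a, b, u, v', hab, rfl, rfl⟩ := hstep
  exact ⟨a, b, u, v' ++ v, hab, by simp, by simp⟩

theorem commSetoid_append {u u' v v' : List V} (hu : commSetoid G u u') (hv : commSetoid G v v') :
    commSetoid G (u ++ v) (u' ++ v') :=
  (commSetoid G).trans' (commSetoid_append_right v hu) (commSetoid_append_left u' hv)

theorem commSetoid_cons_append_of_forall_not_adj {x : V} {w : List V}
    (hx : ∀ y ∈ w, ¬ G.Adj x y) : commSetoid G (x :: w) (w ++ [x]) := by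
  induction w with
  | nil => exact (commSetoid G).refl' _
  | cons y w ih =>
    have hswap : commSetoid G (x :: y :: w) (y :: x :: w) :=
      .rel _ _ ⟨x, y, [], w, hx y (by simp), rfl, rfl⟩
    exact (commSetoid G).trans' hswap
      (commSetoid_append_left [y] (ih fun z hz => hx z (by simp [hz])))

theorem commSetoid_filterMap (f : V → Option W)
    (hf : ∀ a b a' b', ¬ G.Adj a b → f a = some a' → f b = some b' → ¬ G'.Adj a' b')
    {w w' : List V} (h : commSetoid G w w') :
    commSetoid G' (w.filterMap f) (w'.filterMap f) := by
  refine Relation.EqvGen.map _ (fun _ _ hstep => ?_) h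
  obtain ⟨a, b, u, v, hab, rfl, rfl⟩ := hstep
  simp only [List.filterMap_append, List.filterMap_cons]
  refine commSetoid_append_left _ ?_
  rcases ha : f a with _ | a' <;> rcases hb : f b with _ | b'
  all_goals try exact (commSetoid G').refl' _
  exact .rel _ _ ⟨a', b', [], _, hf a b a' b' hab ha hb, rfl, rfl⟩

theorem commSetoid_map (f : V → W) (hf : ∀ a b, ¬ G.Adj a b → ¬ G'.Adj (f a) (f b))
    {w w' : List V} (h : commSetoid G w w') :
    commSetoid G' (w.map f) (w'.map f) := by
  simpa only [List.filterMap_eq_map] using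
    commSetoid_filterMap (G' := G') (some ∘ f) (by simp_all) h

end CommutationEquivalence

section WordClasses

variable {V : Type*} (G : SimpleGraph V)

abbrev InjWordClass (k : ℕ) : Type _ :=
  Quotient (Setoid.comap (fun w : {w : List V // w.Nodup ∧ w.length = k} => w.1) (commSetoid G))

abbrev WordClass : Type _ := Σ k, InjWordClass G k

instance [Finite V] (k : ℕ) : Finite (InjWordClass G k) :=
  have : Finite {w : List V // w.Nodup ∧ w.length = k} :=
    ((List.finite_length_eq V k).subset fun _ hw => hw.2).to_subtype
  Quotient.finite _

theorem bWords_eq_zero_of_card_lt [Fintype V] {k : ℕ} (hk : Fintype.card V < k) :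
    bWords G k = 0 := by
  have : IsEmpty {w : List V // w.Nodup ∧ w.length = k} :=
    ⟨fun w => absurd w.2.1.length_le_card (by rw [w.2.2]; omega)⟩
  exact Nat.card_of_isEmpty

def WordClass.mk (w : List V) (hw : w.Nodup) : WordClass G :=
  ⟨w.length, Quotient.mk _ ⟨w, hw, rfl⟩⟩

variable {G}

theorem WordClass.sigma_mk_eq_iff {i j : ℕ} {x : {w : List V // w.Nodup ∧ w.length = i}}
    {y : {w : List V // w.Nodup ∧ w.length = j}} :
    (⟨i, Quotient.mk _ x⟩ : WordClass G) = ⟨j, Quotient.mk _ y⟩ ↔ commSetoid G x.1 y.1 := by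
  constructor
  · intro h
    obtain ⟨rfl, hxy⟩ := Sigma.mk.inj_iff.mp h
    exact Quotient.exact (s := Setoid.comap Subtype.val (commSetoid G)) (eq_of_heq hxy)
  · intro h
    obtain rfl : i = j := x.2.2.symm.trans ((commSetoid_length h).trans y.2.2)
    exact congrArg _ (Quotient.sound h)

end WordClasses

theorem Nat.card_gradedPairs_eq_sum_antidiagonal {A B : ℕ → Type*} [∀ i, Finite (A i)]
    [∀ j, Finite (B j)] (k : ℕ) :
    Nat.card {p : (Σ i, A i) × (Σ j, B j) // p.1.1 + p.2.1 = k} =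
      ∑ ij ∈ antidiagonal k, Nat.card (A ij.1) * Nat.card (B ij.2) := by
  let e : {p : (Σ i, A i) × (Σ j, B j) // p.1.1 + p.2.1 = k} ≃
      Σ ij : antidiagonal k, A ij.1.1 × B ij.1.2 :=
    { toFun := fun ⟨(⟨i, a⟩, ⟨j, b⟩), h⟩ => ⟨⟨(i, j), mem_antidiagonal.2 h⟩, a, b⟩
      invFun := fun ⟨⟨(i, j), h⟩, a, b⟩ => ⟨(⟨i, a⟩, ⟨j, b⟩), mem_antidiagonal.1 h⟩
      left_inv := fun _ => rfl
      right_inv := fun _ => rfl }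
  rw [Nat.card_congr e, Nat.card_sigma]
  simp only [Nat.card_prod]
  exact sum_coe_sort (antidiagonal k) fun ij => Nat.card (A ij.1) * Nat.card (B ij.2)

section DisjointUnion

variable {V₁ V₂ : Type*} {H₁ : SimpleGraph V₁} {H₂ : SimpleGraph V₂}

theorem commSetoid_disjUnion_sort (w : List (V₁ ⊕ V₂)) :
    commSetoid (disjUnionGraph H₁ H₂) w
      ((w.filterMap Sum.getLeft?).map Sum.inl ++ (w.filterMap Sum.getRight?).map Sum.inr) := by
  induction w with
  | nil => exact (commSetoid _).refl' _
  | cons x w ih =>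
    cases x with
    | inl a => simpa [List.filterMap_cons] using commSetoid_append_left [Sum.inl a] ih
    | inr b =>
      have hcross := commSetoid_cons_append_of_forall_not_adj (G := disjUnionGraph H₁ H₂)
        (x := Sum.inr b) (w := (w.filterMap Sum.getLeft?).map Sum.inl) (by simp [disjUnionGraph])
      refine (commSetoid _).trans' (commSetoid_append_left [Sum.inr b] ih) ?_
      simpa [List.filterMap_cons] using
        commSetoid_append_right ((w.filterMap Sum.getRight?).map Sum.inr) hcross

theorem commSetoid_disjUnion_iff {w w' : List (V₁ ⊕ V₂)} :
    commSetoid (disjUnionGraph H₁ H₂) w w' ↔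
      commSetoid H₁ (w.filterMap Sum.getLeft?) (w'.filterMap Sum.getLeft?) ∧
      commSetoid H₂ (w.filterMap Sum.getRight?) (w'.filterMap Sum.getRight?) := by
  constructor
  · intro h
    exact ⟨commSetoid_filterMap _ (by rintro (a | a) (b | b) <;> simp_all [disjUnionGraph]) h,
      commSetoid_filterMap _ (by rintro (a | a) (b | b) <;> simp_all [disjUnionGraph]) h⟩
  · rintro ⟨h₁, h₂⟩
    refine (commSetoid _).trans' (commSetoid_disjUnion_sort w) ?_
    refine (commSetoid _).trans' ?_ ((commSetoid _).symm' (commSetoid_disjUnion_sort w'))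
    exact commSetoid_append (commSetoid_map Sum.inl (fun _ _ h => h) h₁)
      (commSetoid_map Sum.inr (fun _ _ h => h) h₂)

theorem length_filterMap_getLeft?_add_getRight? (w : List (V₁ ⊕ V₂)) :
    (w.filterMap Sum.getLeft?).length + (w.filterMap Sum.getRight?).length = w.length := by
  induction w with
  | nil => rfl
  | cons x w ih => cases x <;> simp [List.filterMap_cons] <;> omega

theorem List.Nodup.filterMap_getLeft? {w : List (V₁ ⊕ V₂)} (hw : w.Nodup) :
    (w.filterMap Sum.getLeft?).Nodup :=
  hw.filterMap (by rintro (a | a) (b | b) <;> simp_all)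

theorem List.Nodup.filterMap_getRight? {w : List (V₁ ⊕ V₂)} (hw : w.Nodup) :
    (w.filterMap Sum.getRight?).Nodup :=
  hw.filterMap (by rintro (a | a) (b | b) <;> simp_all)

variable (H₁ H₂) in
def splitWord {k : ℕ} (w : {w : List (V₁ ⊕ V₂) // w.Nodup ∧ w.length = k}) :
    {p : WordClass H₁ × WordClass H₂ // p.1.1 + p.2.1 = k} :=
  ⟨(WordClass.mk H₁ _ w.2.1.filterMap_getLeft?, WordClass.mk H₂ _ w.2.1.filterMap_getRight?),
    (length_filterMap_getLeft?_add_getRight? w.1).trans w.2.2⟩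

theorem splitWord_eq_iff {k : ℕ} {w w' : {w : List (V₁ ⊕ V₂) // w.Nodup ∧ w.length = k}} :
    splitWord H₁ H₂ w = splitWord H₁ H₂ w' ↔ commSetoid (disjUnionGraph H₁ H₂) w.1 w'.1 := by
  rw [commSetoid_disjUnion_iff, Subtype.ext_iff, Prod.ext_iff]
  exact and_congr WordClass.sigma_mk_eq_iff WordClass.sigma_mk_eq_iff

theorem splitWord_surjective (k : ℕ) : Function.Surjective (splitWord (k := k) H₁ H₂) := by
  rintro ⟨⟨⟨i, c₁⟩, ⟨j, c₂⟩⟩, hk⟩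
  obtain ⟨x, rfl⟩ := Quotient.mk_surjective c₁
  obtain ⟨y, rfl⟩ := Quotient.mk_surjective c₂
  refine ⟨⟨x.1.map Sum.inl ++ y.1.map Sum.inr, ?_, ?_⟩, ?_⟩
  · exact List.nodup_append.2 ⟨x.2.1.map Sum.inl_injective, y.2.1.map Sum.inr_injective, by simp⟩
  · simp [x.2.2, y.2.2, hk]
  · refine Subtype.ext (Prod.ext (WordClass.sigma_mk_eq_iff.2 ?_) (WordClass.sigma_mk_eq_iff.2 ?_))
    · simp [Function.comp_def]
    · simp [Function.comp_def]

variable (H₁ H₂) in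
noncomputable def injWordClassDisjUnionEquiv (k : ℕ) :
    InjWordClass (disjUnionGraph H₁ H₂) k ≃
      {p : WordClass H₁ × WordClass H₂ // p.1.1 + p.2.1 = k} :=
  Equiv.ofBijective (Quotient.lift (splitWord H₁ H₂) fun _ _ h => splitWord_eq_iff.2 h)
    ⟨fun c c' => Quotient.inductionOn₂ c c' fun _ _ h => Quotient.sound (splitWord_eq_iff.1 h),
      Function.Surjective.of_comp (g := Quotient.mk _) (splitWord_surjective k)⟩

theorem bWords_disjUnion [Finite V₁] [Finite V₂] (k : ℕ) :
    bWords (disjUnionGraph H₁ H₂) k = ∑ ij ∈ antidiagonal k, bWords H₁ ij.1 * bWords H₂ ij.2 :=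
  (Nat.card_congr (injWordClassDisjUnionEquiv H₁ H₂ k)).trans
    (Nat.card_gradedPairs_eq_sum_antidiagonal k)

end DisjointUnion

section WordPolynomial

variable {V : Type*} [Fintype V]

noncomputable def wordPolynomial (G : SimpleGraph V) : ℤ[X] :=
  ∑ k ∈ range (Fintype.card V + 1), C (bWords G k : ℤ) * X ^ k

theorem coeff_wordPolynomial (G : SimpleGraph V) (k : ℕ) :
    (wordPolynomial G).coeff k = bWords G k := by
  rw [wordPolynomial, finsetSum_coeff]
  simp_rw [coeff_C_mul_X_pow]
  rw [sum_ite_eq]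
  split_ifs with hk
  · rfl
  · rw [bWords_eq_zero_of_card_lt G (by simpa using hk), Nat.cast_zero]

theorem booleanNumber_eq_eval_wordPolynomial (G : SimpleGraph V) :
    booleanNumber G = (-1) ^ Fintype.card V * (wordPolynomial G).eval (-1) := by
  simp [booleanNumber, wordPolynomial, eval_finsetSum, mul_comm]

end WordPolynomial

theorem wordPolynomial_disjUnion {V₁ V₂ : Type*} [Fintype V₁] [Fintype V₂]
    (H₁ : SimpleGraph V₁) (H₂ : SimpleGraph V₂) :
    wordPolynomial (disjUnionGraph H₁ H₂) = wordPolynomial H₁ * wordPolynomial H₂ := by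
  ext k
  simp only [coeff_mul, coeff_wordPolynomial, bWords_disjUnion, Nat.cast_sum, Nat.cast_mul]

/-- **The boolean number is multiplicative over disjoint unions:**
if `G = H₁ ⊔ H₂` then `β(G) = β(H₁) · β(H₂)`. -/
theorem booleanNumber_disjUnion {V₁ V₂ : Type*} [Fintype V₁] [Fintype V₂]
    (H₁ : SimpleGraph V₁) (H₂ : SimpleGraph V₂) :
    booleanNumber (disjUnionGraph H₁ H₂) = booleanNumber H₁ * booleanNumber H₂ := by
  simp only [booleanNumber_eq_eval_wordPolynomial, wordPolynomial_disjUnion, eval_mul,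
    Fintype.card_sum, pow_add]
  ring
end

section
/- For every n ≥ 3, the cycle graph C_n on n vertices (the unlabeled Coxeter graph of the affine Coxeter group Ã_{n−1}) satisfies β(C_n) = f(n+1) + f(n−1) − 2, where f is the Fibonacci sequence (equivalently, β(C_n) is the n-th Lucas number minus 2). -/
/-- The cycle graph on `n` vertices `0, 1, …, n-1`, with edges `{i, i+1 mod n}`. -/
def cycleG (n : ℕ) : SimpleGraph (Fin n) where
  Adj i j := i ≠ j ∧ ((i.1 + 1) % n = j.1 ∨ (j.1 + 1) % n = i.1)
  symm := ⟨by intro i j ⟨h1, h2⟩; exact ⟨h1.symm, h2.symm⟩⟩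
  loopless := ⟨by intro i h; exact h.1 rfl⟩

/-!
Two injective words are commutation equivalent iff they use the same letters and order the
endpoints of every edge of `G` in the same way, and every acyclic orientation of the subgraph
induced on a set `S` of letters comes from a word (a linear extension). On `C_n` the edges inside
a proper subset `S` form paths, so all `2 ^ e(S)` orientations are acyclic, while for `S = V` only
the two cyclic ones are excluded. Hence `β(C_n) = (-1)^n ∑_S (-1)^|S| 2^e(S) - 2`, and the sum is
the trace of the `n`-th power of a `2 × 2` transfer matrix `M` with `M² = 1 - M`, that is
`(-1)^n (f(n+1) + f(n-1))`.
-/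

open List Relation

section WordOrder

variable {α : Type*}

def Before (w : List α) (x y : α) : Prop := [x, y] <+ w

instance [DecidableEq α] (w : List α) : DecidableRel (Before w) :=
  fun x y => inferInstanceAs (Decidable ([x, y] <+ w))

variable {w : List α} {x y z : α}

theorem Before.mem_left (h : Before w x y) : x ∈ w := h.subset (by simp)

theorem Before.mem_right (h : Before w x y) : y ∈ w := h.subset (by simp)

theorem before_cons {c : α} : Before (c :: w) x y ↔ (x = c ∧ y ∈ w) ∨ Before w x y := by
  simp only [Before, sublist_cons_iff, cons.injEq]
  grind

theorem Before.ne (hw : w.Nodup) (h : Before w x y) : x ≠ y :=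
  pairwise_iff_forall_sublist.mp hw h

theorem Before.not_before (hw : w.Nodup) (h : Before w x y) : ¬ Before w y x := by
  induction w with
  | nil => simp [Before] at h
  | cons c w ih =>
    rw [nodup_cons] at hw
    rw [before_cons] at h ⊢
    rcases h with ⟨rfl, hy⟩ | h
    · rintro (⟨rfl, -⟩ | h')
      · exact hw.1 hy
      · exact hw.1 h'.mem_right
    · rintro (⟨rfl, -⟩ | h')
      · exact hw.1 h.mem_right
      · exact ih hw.2 h h'

theorem Before.trans (hw : w.Nodup) (hxy : Before w x y) (hyz : Before w y z) :
    Before w x z := by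
  induction w with
  | nil => simp [Before] at hxy
  | cons c w ih =>
    rw [nodup_cons] at hw
    rw [before_cons] at hxy hyz ⊢
    rcases hyz with ⟨rfl, -⟩ | hyz
    · rcases hxy with ⟨rfl, hy⟩ | hxy
      · exact absurd hy hw.1
      · exact absurd hxy.mem_right hw.1
    · rcases hxy with ⟨rfl, -⟩ | hxy
      · exact .inl ⟨rfl, hyz.mem_right⟩
      · exact .inr (ih hw.2 hxy hyz)

theorem before_or_before (hx : x ∈ w) (hy : y ∈ w) (hxy : x ≠ y) :
    Before w x y ∨ Before w y x := by
  induction w with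
  | nil => simp at hx
  | cons c w ih =>
    simp only [before_cons]
    rcases mem_cons.mp hx with rfl | hx' <;> rcases mem_cons.mp hy with rfl | hy'
    · exact absurd rfl hxy
    · exact .inl (.inl ⟨rfl, hy'⟩)
    · exact .inr (.inl ⟨rfl, hx'⟩)
    · rcases ih hx' hy' with h | h
      · exact .inl (.inr h)
      · exact .inr (.inr h)

theorem before_iff_not_before (hw : w.Nodup) (hxy : x ≠ y) :
    Before w y x ↔ x ∈ w ∧ y ∈ w ∧ ¬ Before w x y :=
  ⟨fun h => ⟨h.mem_right, h.mem_left, fun h' => h'.not_before hw h⟩,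
    fun ⟨hx, hy, h⟩ => (before_or_before hx hy hxy).resolve_left h⟩

theorem before_append_swap_iff {u v : List α} {a b : α} (hab : ¬ (x = a ∧ y = b))
    (hba : ¬ (x = b ∧ y = a)) :
    Before (u ++ a :: b :: v) x y ↔ Before (u ++ b :: a :: v) x y := by
  induction u with
  | nil =>
    simp only [nil_append, before_cons, mem_cons]
    grind
  | cons c u ih =>
    have hmem : y ∈ u ++ a :: b :: v ↔ y ∈ u ++ b :: a :: v := by
      simp only [mem_append, mem_cons]
      tauto
    simp only [cons_append, before_cons, ih, hmem]

theorem Before.of_pairwise {s : α → α → Prop} (hw : w.Pairwise s) (h : Before w x y) : s x y :=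
  pairwise_iff_forall_sublist.mp hw h

end WordOrder

section Commutation

variable {V : Type*} {G : SimpleGraph V} {w w' : List V}

theorem CommStep.perm (h : CommStep G w w') : w ~ w' := by
  obtain ⟨a, b, u, v, -, rfl, rfl⟩ := h
  exact .append_left u (.swap b a v)

theorem CommStep.before_iff (h : CommStep G w w') {x y : V} (hxy : G.Adj x y) :
    Before w x y ↔ Before w' x y := by
  obtain ⟨a, b, u, v, hab, rfl, rfl⟩ := h
  apply before_append_swap_iff
  · rintro ⟨rfl, rfl⟩; exact hab hxy
  · rintro ⟨rfl, rfl⟩; exact hab hxy.symm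

theorem Relation.EqvGen.commStep_invariants (h : EqvGen (CommStep G) w w') :
    w ~ w' ∧ ∀ x y, G.Adj x y → (Before w x y ↔ Before w' x y) := by
  induction h with
  | rel _ _ h => exact ⟨h.perm, fun x y => h.before_iff⟩
  | refl => exact ⟨.refl _, fun _ _ _ => .rfl⟩
  | symm _ _ _ ih => exact ⟨ih.1.symm, fun x y hxy => (ih.2 x y hxy).symm⟩
  | trans _ _ _ _ _ ih ih' =>
    exact ⟨ih.1.trans ih'.1, fun x y hxy => (ih.2 x y hxy).trans (ih'.2 x y hxy)⟩

theorem Relation.EqvGen.commStep_cons (c : V) (h : EqvGen (CommStep G) w w') :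
    EqvGen (CommStep G) (c :: w) (c :: w') := by
  induction h with
  | rel _ _ h =>
    obtain ⟨a, b, u, v, hab, rfl, rfl⟩ := h
    exact .rel _ _ ⟨a, b, c :: u, v, hab, rfl, rfl⟩
  | refl => exact .refl _
  | symm _ _ _ ih => exact .symm _ _ ih
  | trans _ _ _ _ _ ih ih' => exact .trans _ _ _ ih ih'

theorem eqvGen_commStep_append_cons {u : List V} {a : V} (hu : ∀ x ∈ u, ¬ G.Adj x a)
    (v : List V) : EqvGen (CommStep G) (u ++ a :: v) (a :: (u ++ v)) := by
  induction u with
  | nil => exact .refl _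
  | cons c u ih =>
    have hc : CommStep G (c :: a :: (u ++ v)) (a :: c :: (u ++ v)) :=
      ⟨c, a, [], u ++ v, hu c mem_cons_self, rfl, rfl⟩
    exact .trans _ _ _ ((ih fun x hx => hu x (mem_cons_of_mem c hx)).commStep_cons c) (.rel _ _ hc)

theorem eqvGen_commStep_of_perm (hw : w.Nodup) (hperm : w ~ w')
    (hbefore : ∀ x y, G.Adj x y → (Before w x y ↔ Before w' x y)) :
    EqvGen (CommStep G) w w' := by
  induction w' generalizing w with
  | nil => rw [perm_nil.mp hperm]; exact .refl _
  | cons a t ih =>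
    obtain ⟨u, v, rfl⟩ := append_of_mem (hperm.symm.subset mem_cons_self)
    have hw₁ : (a :: (u ++ v)).Nodup := perm_middle.nodup_iff.mp hw
    have hat : a ∉ t := (nodup_cons.mp (hperm.nodup_iff.mp hw)).1
    -- a neighbour of `a` in front of it would stay in front of it, but `a` comes first in `a :: t`
    have hu : ∀ x ∈ u, ¬ G.Adj x a := by
      intro x hx hxa
      have : Before (a :: t) x a := (hbefore x a hxa).mp ((singleton_sublist.mpr hx).append
        (singleton_sublist.mpr mem_cons_self))
      rcases before_cons.mp this with ⟨rfl, -⟩ | h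
      · exact (nodup_cons.mp hw₁).1 (mem_append_left v hx)
      · exact hat h.mem_right
    have hfront := eqvGen_commStep_append_cons hu v
    refine .trans _ _ _ hfront (EqvGen.commStep_cons a (ih (nodup_cons.mp hw₁).2
      ((perm_middle.symm.trans hperm).cons_inv) fun x y hxy => ?_))
    have h := (hfront.commStep_invariants.2 x y hxy).symm.trans (hbefore x y hxy)
    rcases eq_or_ne x a with rfl | hxa
    · exact iff_of_false (fun h' => (nodup_cons.mp hw₁).1 h'.mem_left) (fun h' => hat h'.mem_left)
    · simpa [before_cons, hxa] using h

theorem eqvGen_commStep_iff (hw : w.Nodup) :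
    EqvGen (CommStep G) w w' ↔ w ~ w' ∧ ∀ x y, G.Adj x y → (Before w x y ↔ Before w' x y) :=
  ⟨EqvGen.commStep_invariants, fun h => eqvGen_commStep_of_perm hw h.1 h.2⟩

theorem bWords_eq_natCard_range {β : Type*} (f : List V → β)
    (hf : ∀ w w' : List V, w.Nodup → w'.Nodup → (EqvGen (CommStep G) w w' ↔ f w = f w'))
    (k : ℕ) :
    bWords G k = Nat.card (Set.range fun w : {w : List V // w.Nodup ∧ w.length = k} => f w.1) :=
  Nat.card_congr <| (Quotient.congrRight fun w w' => hf w.1 w'.1 w.2.1 w'.2.1).trans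
    (Setoid.quotientKerEquivRange _)

end Commutation

open Fin.NatCast Fin.CommRing

section CycleWalks

variable {n : ℕ} [NeZero n]

theorem Fin.add_one_ne_self (hn : 2 ≤ n) (x : Fin n) : x + 1 ≠ x := by
  intro h
  have : ((1 : ℕ) : Fin n) = 0 := by push_cast; linear_combination h
  have := Nat.le_of_dvd Nat.one_pos (Fin.natCast_eq_zero.mp this)
  omega

theorem Fin.add_one_add_one_ne_self (hn : 3 ≤ n) (x : Fin n) : x + 1 + 1 ≠ x := by
  intro h
  have : ((2 : ℕ) : Fin n) = 0 := by push_cast; linear_combination h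
  have := Nat.le_of_dvd Nat.two_pos (Fin.natCast_eq_zero.mp this)
  omega

theorem Fin.not_forall_rel_add_one {r : Fin n → Fin n → Prop}
    (htrans : ∀ a b c, r a b → r b c → r a c) (hirr : ∀ a, ¬ r a a) : ¬ ∀ i, r i (i + 1) := by
  intro h
  have key : ∀ k : ℕ, r 0 ((k + 1 : ℕ) : Fin n) := by
    intro k
    induction k with
    | zero => simpa using h 0
    | succ k ih => exact htrans _ _ _ ih (by rw [Nat.cast_succ (k + 1)]; exact h _)
  have := key (n - 1)
  rw [Nat.sub_add_cancel NeZero.one_le, Fin.natCast_self] at this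
  exact hirr 0 this

variable {D : Fin n → Fin n → Prop}

theorem Relation.TransGen.exists_monotone_walk (hstep : ∀ x y, D x y → y = x + 1 ∨ x = y + 1)
    (hback : ∀ x, D x (x + 1) → ¬ D (x + 1) x) {x y : Fin n} (h : TransGen D x y) :
    ∃ L : ℕ, 0 < L ∧ ((y = x + L ∧ ∀ i < L, D (x + i) (x + i + 1)) ∨
      (x = y + L ∧ ∀ i < L, D (y + i + 1) (y + i))) := by
  induction h with
  | single hxy =>
    refine ⟨1, one_pos, ?_⟩
    rcases hstep _ _ hxy with rfl | rfl
    · exact .inl ⟨by simp, fun i hi => by simpa [Nat.lt_one_iff.mp hi] using hxy⟩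
    · exact .inr ⟨by simp, fun i hi => by simpa [Nat.lt_one_iff.mp hi] using hxy⟩
  | @tail y z _ hyz ih =>
    obtain ⟨L, hL, ⟨rfl, hwalk⟩ | ⟨rfl, hwalk⟩⟩ := ih
    · rcases hstep _ _ hyz with rfl | hzy
      · refine ⟨L + 1, L.succ_pos, .inl ⟨by push_cast; ring, fun i hi => ?_⟩⟩
        rcases Nat.lt_succ_iff_lt_or_eq.mp hi with hi | rfl
        · exact hwalk i hi
        · exact hyz
      · -- the last step of the walk was `z → z + 1`
        have hlast := hwalk (L - 1) (by omega)
        have hz : x + ((L - 1 : ℕ) : Fin n) = z := by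
          rw [Nat.cast_sub (by omega : 1 ≤ L), Nat.cast_one]; linear_combination hzy
        rw [hz] at hlast
        exact (hback z hlast (hzy ▸ hyz)).elim
    · rcases hstep _ _ hyz with rfl | rfl
      · exact absurd (by simpa using hwalk 0 hL) (hback y hyz)
      · refine ⟨L + 1, L.succ_pos, .inr ⟨by push_cast; ring, fun i hi => ?_⟩⟩
        cases i with
        | zero => simpa using hyz
        | succ i => simpa [add_assoc, add_comm, add_left_comm] using hwalk i (by omega)

theorem Relation.TransGen.forall_step_of_self (hstep : ∀ x y, D x y → y = x + 1 ∨ x = y + 1)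
    (hback : ∀ x, D x (x + 1) → ¬ D (x + 1) x) {x : Fin n} (h : TransGen D x x) :
    (∀ z, D z (z + 1)) ∨ ∀ z, D (z + 1) z := by
  obtain ⟨L, hL, ⟨hx, hwalk⟩ | ⟨hx, hwalk⟩⟩ := h.exists_monotone_walk hstep hback
  all_goals
    have hnL : n ≤ L := Nat.le_of_dvd hL <| Fin.natCast_eq_zero.mp <| by
      linear_combination -hx
  · refine .inl fun z => ?_
    simpa using hwalk (z - x).val ((z - x).is_lt.trans_le hnL)
  · refine .inr fun z => ?_
    simpa using hwalk (z - x).val ((z - x).is_lt.trans_le hnL)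

end CycleWalks

theorem exists_nodup_before_of_acyclic {α : Type*} [DecidableEq α] {D : α → α → Prop}
    (hD : ∀ x, ¬ TransGen D x x) (S : Finset α) :
    ∃ w : List α, w.Nodup ∧ w.toFinset = S ∧ ∀ x ∈ S, ∀ y ∈ S, D x y → Before w x y := by
  have : IsPartialOrder α (ReflTransGen D) :=
    { refl := fun _ => .refl
      trans := fun _ _ _ => ReflTransGen.trans
      antisymm := fun a b hab hba => by
        rcases reflTransGen_iff_eq_or_transGen.mp hab with rfl | hab'
        · rfl
        rcases reflTransGen_iff_eq_or_transGen.mp hba with rfl | hba'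
        · rfl
        exact absurd (hab'.trans hba') (hD a) }
  obtain ⟨s, hlin, hDs⟩ := extend_partialOrder (ReflTransGen D)
  have : Std.Total s := hlin.2
  have : IsTrans α s := hlin.1.1.2
  have : Std.Antisymm s := hlin.1.2
  have : DecidableRel s := Classical.decRel s
  refine ⟨S.sort s, S.sort_nodup s, S.sort_toFinset s, fun x hx y hy hxy => ?_⟩
  have hne : x ≠ y := by rintro rfl; exact hD x (.single hxy)
  refine (before_or_before ((S.mem_sort s).mpr hx) ((S.mem_sort s).mpr hy) hne).resolve_right
    fun hyx => hne ?_
  exact Std.Antisymm.antisymm x y (hDs _ _ (.single hxy)) (hyx.of_pairwise (S.pairwise_sort s))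

section CycleCode

variable {n : ℕ} [NeZero n]

theorem cycleG_adj_iff (hn : 2 ≤ n) {i j : Fin n} : (cycleG n).Adj i j ↔ j = i + 1 ∨ i = j + 1 := by
  have hval : ∀ k : Fin n, ((k + 1 : Fin n) : ℕ) = (k.1 + 1) % n := fun k => by
    rw [Fin.val_add, Fin.val_one', Nat.mod_eq_of_lt (by omega : 1 < n)]
  simp only [cycleG, ne_eq, Fin.ext_iff, hval]
  constructor
  · rintro ⟨-, h | h⟩
    · exact .inl h.symm
    · exact .inr h.symm
  · rintro (h | h)
    · exact ⟨fun hij => Fin.add_one_ne_self hn i (Fin.ext (by rw [hval, ← h, hij])), .inl h.symm⟩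
    · exact ⟨fun hij => Fin.add_one_ne_self hn j (Fin.ext (by rw [hval, ← h, hij])), .inr h.symm⟩

def edgesWithin (S : Finset (Fin n)) : Finset (Fin n) := {i | i ∈ S ∧ i + 1 ∈ S}

theorem mem_edgesWithin {S : Finset (Fin n)} {i : Fin n} :
    i ∈ edgesWithin S ↔ i ∈ S ∧ i + 1 ∈ S := by
  simp [edgesWithin]

/-- An orientation of the edges `{i, i + 1}` of `C_n` inside `S` is encoded by the set `T` of
those `i` for which the edge points from `i` to `i + 1`; it has a directed cycle exactly when
`S` is everything and all edges point the same way. -/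
def IsAcyclicOrientation (S T : Finset (Fin n)) : Prop :=
  T ⊆ edgesWithin S ∧ (S = Finset.univ → T ≠ ∅ ∧ T ≠ Finset.univ)

instance (S T : Finset (Fin n)) : Decidable (IsAcyclicOrientation S T) :=
  inferInstanceAs (Decidable (_ ∧ _))

def cycleCode (w : List (Fin n)) : Finset (Fin n) × Finset (Fin n) :=
  (w.toFinset, ({i | Before w i (i + 1)} : Finset (Fin n)))

theorem cycleCode_eq_iff (hn : 2 ≤ n) {w w' : List (Fin n)} (hw : w.Nodup) (hw' : w'.Nodup) :
    cycleCode w = cycleCode w' ↔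
      w ~ w' ∧ ∀ x y, (cycleG n).Adj x y → (Before w x y ↔ Before w' x y) := by
  simp only [cycleCode, Prod.ext_iff, Finset.ext_iff, mem_toFinset, Finset.mem_filter,
    Finset.mem_univ, true_and, ← perm_ext_iff_of_nodup hw hw']
  refine and_congr_right fun hperm => ⟨fun h x y hxy => ?_,
    fun h i => h i (i + 1) ((cycleG_adj_iff hn).mpr (.inl rfl))⟩
  rcases (cycleG_adj_iff hn).mp hxy with rfl | rfl
  · exact h x
  · have hne : y ≠ y + 1 := hxy.ne.symm
    rw [before_iff_not_before hw hne, before_iff_not_before hw' hne, hperm.mem_iff, hperm.mem_iff,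
      h y]

theorem isAcyclicOrientation_cycleCode (hn : 2 ≤ n) {w : List (Fin n)} (hw : w.Nodup) :
    IsAcyclicOrientation (cycleCode w).1 (cycleCode w).2 := by
  have htrans : ∀ a b c, Before w a b → Before w b c → Before w a c :=
    fun _ _ _ => Before.trans hw
  have hirr : ∀ a, ¬ Before w a a := fun a h => h.ne hw rfl
  refine ⟨fun i hi => ?_, fun hS => ⟨fun hT => ?_, fun hT => ?_⟩⟩
  · simp only [cycleCode, Finset.mem_filter, Finset.mem_univ, true_and] at hi
    simp [mem_edgesWithin, cycleCode, hi.mem_left, hi.mem_right]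
  · have hmem : ∀ i, i ∈ w := by simpa [cycleCode, Finset.eq_univ_iff_forall] using hS
    have hT : ∀ i, ¬ Before w i (i + 1) := by
      simpa [cycleCode, Finset.eq_empty_iff_forall_notMem] using hT
    refine Fin.not_forall_rel_add_one (r := flip (Before w))
      (fun a b c hab hbc => htrans c b a hbc hab) hirr fun i => ?_
    exact (before_iff_not_before hw (Fin.add_one_ne_self hn i).symm).mpr
      ⟨hmem i, hmem (i + 1), hT i⟩
  · exact Fin.not_forall_rel_add_one htrans hirr
      (by simpa [cycleCode, Finset.eq_univ_iff_forall] using hT)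

theorem exists_cycleCode_eq (hn : 3 ≤ n) {S T : Finset (Fin n)} (h : IsAcyclicOrientation S T) :
    ∃ w : List (Fin n), w.Nodup ∧ cycleCode w = (S, T) := by
  let D : Fin n → Fin n → Prop := fun x y =>
    (y = x + 1 ∧ x ∈ T) ∨ (x = y + 1 ∧ y ∈ edgesWithin S \ T)
  have hstep : ∀ x y, D x y → y = x + 1 ∨ x = y + 1 := fun x y hxy => hxy.imp And.left And.left
  have hne := Fin.add_one_add_one_ne_self hn
  have hback : ∀ x, D x (x + 1) → ¬ D (x + 1) x := by
    rintro x (⟨-, hx⟩ | ⟨hx, -⟩) (⟨hx', -⟩ | ⟨-, hx'⟩)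
    exacts [hne x hx'.symm, (Finset.mem_sdiff.mp hx').2 hx, hne x hx.symm, hne x hx.symm]
  have hacyc : ∀ x, ¬ TransGen D x x := by
    intro x hx
    rcases hx.forall_step_of_self hstep hback with hfwd | hbwd
    · have hT : ∀ i, i ∈ T := fun i => (hfwd i).elim And.right fun h => (hne i h.1.symm).elim
      have hS : S = Finset.univ :=
        Finset.eq_univ_of_forall fun i => (mem_edgesWithin.mp (h.1 (hT i))).1
      exact (h.2 hS).2 (Finset.eq_univ_of_forall hT)
    · have hE : ∀ i, i ∈ edgesWithin S \ T := fun i =>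
        (hbwd i).elim (fun h => (hne i h.1.symm).elim) And.right
      have hS : S = Finset.univ :=
        Finset.eq_univ_of_forall fun i => (mem_edgesWithin.mp (Finset.mem_sdiff.mp (hE i)).1).1
      exact (h.2 hS).1 (Finset.eq_empty_of_forall_notMem fun i => (Finset.mem_sdiff.mp (hE i)).2)
  obtain ⟨w, hw, hwS, hbefore⟩ := exists_nodup_before_of_acyclic hacyc S
  have hmem : ∀ x, x ∈ w ↔ x ∈ S := fun x => by rw [← hwS, mem_toFinset]
  refine ⟨w, hw, Prod.ext hwS (Finset.ext fun i => ?_)⟩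
  simp only [cycleCode, Finset.mem_filter, Finset.mem_univ, true_and]
  constructor
  · intro hi
    by_contra hiT
    have hiS := (hmem i).mp hi.mem_left
    have hi1S := (hmem _).mp hi.mem_right
    exact hi.not_before hw (hbefore _ hi1S _ hiS
      (.inr ⟨rfl, Finset.mem_sdiff.mpr ⟨mem_edgesWithin.mpr ⟨hiS, hi1S⟩, hiT⟩⟩))
  · intro hiT
    obtain ⟨hiS, hi1S⟩ := mem_edgesWithin.mp (h.1 hiT)
    exact hbefore i hiS (i + 1) hi1S (.inl ⟨rfl, hiT⟩)

end CycleCode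

section CycleCount

variable {n : ℕ} [NeZero n]

theorem bWords_cycleG (hn : 3 ≤ n) (k : ℕ) :
    bWords (cycleG n) k = ({p : Finset (Fin n) × Finset (Fin n) |
      p.1.card = k ∧ IsAcyclicOrientation p.1 p.2} : Finset _).card := by
  rw [bWords_eq_natCard_range cycleCode (fun w w' hw hw' =>
    (eqvGen_commStep_iff hw).trans (cycleCode_eq_iff (by omega) hw hw').symm) k,
    Nat.card_coe_set_eq, ← Set.ncard_coe_finset]
  congr 1
  ext ⟨S, T⟩
  simp only [Set.mem_range, Finset.coe_filter, Finset.mem_univ, true_and]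
  constructor
  · rintro ⟨⟨w, hw, hk⟩, hwST⟩
    obtain ⟨rfl, rfl⟩ := Prod.ext_iff.mp hwST
    exact ⟨(toFinset_card_of_nodup hw).trans hk, isAcyclicOrientation_cycleCode (by omega) hw⟩
  · rintro ⟨hk, hST⟩
    obtain ⟨w, hw, hwST⟩ := exists_cycleCode_eq hn hST
    have hS : w.toFinset = S := congrArg Prod.fst hwST
    exact ⟨⟨w, hw, (toFinset_card_of_nodup hw).symm.trans (hS ▸ hk)⟩, hwST⟩

theorem card_filter_isAcyclicOrientation (S : Finset (Fin n)) :
    (({T | IsAcyclicOrientation S T} : Finset _).card : ℤ) =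
      2 ^ (edgesWithin S).card - if S = Finset.univ then 2 else 0 := by
  by_cases hS : S = Finset.univ
  · subst hS
    have hE : edgesWithin (Finset.univ : Finset (Fin n)) = Finset.univ := by simp [edgesWithin]
    have hT : ({T | IsAcyclicOrientation Finset.univ T} : Finset (Finset (Fin n))) =
        (Finset.univ.erase ∅).erase Finset.univ := by
      ext T
      simp [IsAcyclicOrientation, hE, and_comm]
    have hcard : (Finset.univ : Finset (Finset (Fin n))).card = 2 ^ n := by simp
    have hpos : 2 ≤ 2 ^ n := Nat.le_self_pow (NeZero.ne n) 2
    rw [hT, Finset.card_erase_of_mem (by simp [Finset.univ_nonempty.ne_empty]),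
      Finset.card_erase_of_mem (Finset.mem_univ _), hcard, hE, Finset.card_univ, Fintype.card_fin,
      if_pos rfl, Nat.sub_sub, Nat.cast_sub hpos]
    push_cast
    ring
  · have hT : ({T | IsAcyclicOrientation S T} : Finset (Finset (Fin n))) =
        (edgesWithin S).powerset := by
      ext T
      simp [IsAcyclicOrientation, hS]
    rw [hT, Finset.card_powerset, if_neg hS]
    push_cast
    ring

theorem sum_neg_one_pow_mul_bWords_cycleG (hn : 3 ≤ n) :
    ∑ k ∈ Finset.range (n + 1), (-1 : ℤ) ^ k * (bWords (cycleG n) k : ℤ) =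
      ∑ S : Finset (Fin n), (-1 : ℤ) ^ S.card * 2 ^ (edgesWithin S).card - 2 * (-1) ^ n := by
  let A : Finset (Finset (Fin n) × Finset (Fin n)) := {p | IsAcyclicOrientation p.1 p.2}
  calc ∑ k ∈ Finset.range (n + 1), (-1 : ℤ) ^ k * (bWords (cycleG n) k : ℤ)
      = ∑ k ∈ Finset.range (n + 1), ∑ p ∈ A with p.1.card = k, (-1 : ℤ) ^ p.1.card := by
        refine Finset.sum_congr rfl fun k _ => ?_
        rw [Finset.sum_congr rfl fun p hp => by rw [(Finset.mem_filter.mp hp).2],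
          Finset.sum_const, nsmul_eq_mul, mul_comm, bWords_cycleG hn, Finset.filter_filter]
        simp only [and_comm]
    _ = ∑ p ∈ A, (-1 : ℤ) ^ p.1.card := by
        refine Finset.sum_fiberwise_of_maps_to (fun p _ => ?_) _
        simpa [Nat.lt_succ_iff] using Finset.card_le_univ p.1
    _ = ∑ S : Finset (Fin n), (-1 : ℤ) ^ S.card *
          (({T | IsAcyclicOrientation S T} : Finset _).card : ℤ) := by
        simp only [A, Finset.sum_filter, Fintype.sum_prod_type, Finset.card_filter]
        push_cast
        simp only [Finset.mul_sum, mul_ite, mul_one, mul_zero]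
    _ = _ := by
        simp only [card_filter_isAcyclicOrientation, mul_sub, Finset.sum_sub_distrib, mul_ite,
          mul_zero, Finset.sum_ite_eq', Finset.mem_univ, if_true, Finset.card_univ,
          Fintype.card_fin]
        ring

end CycleCount

section ClosedWalks

variable {α R : Type*} [Fintype α] [DecidableEq α] [CommSemiring R]

theorem Matrix.pow_succ_apply_eq_sum_prod (M : Matrix α α R) (m : ℕ) (a b : α) :
    (M ^ (m + 1)) a b = ∑ g : Fin m → α, ∏ i : Fin (m + 1),
      M ((Fin.cons a g : Fin (m + 1) → α) i) ((Fin.snoc g b : Fin (m + 1) → α) i) := by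
  induction m generalizing a with
  | zero => simp [Fin.snoc]
  | succ m ih =>
    rw [pow_succ', Matrix.mul_apply, ← (Fin.consEquiv fun _ => α).sum_comp,
      Fintype.sum_prod_type]
    refine Finset.sum_congr rfl fun c _ => ?_
    rw [ih, Finset.mul_sum]
    refine Finset.sum_congr rfl fun g _ => ?_
    simp [Fin.consEquiv, Fin.prod_univ_succ, ← Fin.cons_snoc_eq_snoc_cons]

theorem Matrix.trace_pow_succ_eq_sum_prod (M : Matrix α α R) (m : ℕ) :
    (M ^ (m + 1)).trace = ∑ g : Fin (m + 1) → α, ∏ i, M (g i) (g (i + 1)) := by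
  have hsnoc : ∀ (a : α) (g : Fin m → α) (i : Fin (m + 1)),
      (Fin.snoc g a : Fin (m + 1) → α) i = (Fin.cons a g : Fin (m + 1) → α) (i + 1) := by
    intro a g i
    induction i using Fin.lastCases with
    | last => simp
    | cast j => simp [Fin.coeSucc_eq_succ]
  rw [Matrix.trace, ← (Fin.consEquiv fun _ => α).sum_comp, Fintype.sum_prod_type]
  simp [Matrix.pow_succ_apply_eq_sum_prod, hsnoc]

end ClosedWalks

/-- Transfer matrix of the weight `(-1) ^ #S * 2 ^ #(edgesWithin S)`: the entry at
`(i ∈ S, i + 1 ∈ S)` contributes `-1` for a vertex `i ∈ S` and `2` for an edge `{i, i + 1} ⊆ S`. -/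
def cycleTransfer : Matrix Bool Bool ℤ :=
  Matrix.of fun p q => (if p then -1 else 1) * (if p && q then 2 else 1)

theorem sum_neg_one_pow_mul_two_pow_edgesWithin_eq_trace (n : ℕ) [NeZero n] :
    ∑ S : Finset (Fin n), (-1 : ℤ) ^ S.card * 2 ^ (edgesWithin S).card =
      (cycleTransfer ^ n).trace := by
  have hweight : ∀ S : Finset (Fin n), (-1 : ℤ) ^ S.card * 2 ^ (edgesWithin S).card =
      ∏ i, cycleTransfer (decide (i ∈ S)) (decide (i + 1 ∈ S)) := by
    intro S
    simp only [cycleTransfer, Matrix.of_apply, Finset.prod_mul_distrib, decide_eq_true_eq,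
      Bool.and_eq_true, ← Finset.prod_filter, Finset.prod_const]
    simp [edgesWithin]
  obtain ⟨m, rfl⟩ : ∃ m, n = m + 1 := ⟨n - 1, (Nat.sub_add_cancel NeZero.one_le).symm⟩
  rw [Matrix.trace_pow_succ_eq_sum_prod, Finset.sum_congr rfl fun S _ => hweight S]
  let e : Finset (Fin (m + 1)) ≃ (Fin (m + 1) → Bool) :=
    ⟨fun S i => decide (i ∈ S), fun g => ({i | g i} : Finset _), fun S => by ext; simp,
      fun g => by funext i; simp⟩
  exact Fintype.sum_equiv e _ _ fun S => rfl

theorem cycleTransfer_sq : cycleTransfer ^ 2 = 1 - cycleTransfer := by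
  ext p q
  cases p <;> cases q <;> simp [sq, Matrix.mul_apply, cycleTransfer]

theorem trace_cycleTransfer_pow_succ (m : ℕ) :
    (cycleTransfer ^ (m + 1)).trace = (-1) ^ (m + 1) * (Nat.fib (m + 2) + Nat.fib m : ℤ) := by
  induction m using Nat.twoStepInduction with
  | zero => simp [Matrix.trace, cycleTransfer]
  | one =>
    rw [show 1 + 1 = 2 from rfl, cycleTransfer_sq]
    simp [Matrix.trace, cycleTransfer, Nat.fib_add_two]
  | more m ih₀ ih₁ =>
    have hrec : cycleTransfer ^ (m + 3) = cycleTransfer ^ (m + 1) - cycleTransfer ^ (m + 2) := by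
      rw [pow_add _ (m + 1) 2, cycleTransfer_sq, mul_sub, mul_one, ← pow_succ]
    rw [hrec, Matrix.trace_sub, ih₀, ih₁, Nat.fib_add_two (n := m + 2), Nat.fib_add_two (n := m)]
    push_cast
    ring

/-- **Boolean number of a cycle.**  For `n ≥ 3`, the cycle graph `C_n` (the unlabeled
Coxeter graph of the affine Coxeter group `Ã_{n-1}`) satisfies
`β(C_n) = f(n+1) + f(n-1) - 2`, i.e. the `n`-th Lucas number minus `2`. -/
theorem booleanNumber_cycleGraph (n : ℕ) (hn : 3 ≤ n) :
    booleanNumber (cycleG n) = (Nat.fib (n + 1) : ℤ) + (Nat.fib (n - 1) : ℤ) - 2 := by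
  have : NeZero n := ⟨by omega⟩
  obtain ⟨m, rfl⟩ : ∃ m, n = m + 1 := ⟨n - 1, by omega⟩
  rw [booleanNumber, Fintype.card_fin, sum_neg_one_pow_mul_bWords_cycleG hn,
    sum_neg_one_pow_mul_two_pow_edgesWithin_eq_trace, trace_cycleTransfer_pow_succ,
    Nat.add_sub_cancel]
  have hsq : (-1 : ℤ) ^ (m + 1) * (-1) ^ (m + 1) = 1 := by rw [← mul_pow]; norm_num
  linear_combination (Nat.fib (m + 2) + Nat.fib m - 2 : ℤ) * hsq
end
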